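/- arXiv:math/0403541 — 2 statements merged into one kernel-verified Lean document; each statement's English description precedes it below -/
import Mathlib

section
/- (Full-column removal for LR fillings.) Let μ ⊆ θ be partitions and suppose μ has a k-full column in θ, i.e., θ_k ≥ μ_k > θ_{k+1} (with θ_{k+1} = 0 if k is the number of parts of θ). For a partition σ with σ_k ≥ 1, let σ − 1^k denote the partition with (σ − 1^k)_j = σ_j − 1 for j ≤ k and (σ − 1^k)_j = σ_j for j > k. Then for every partition ν, the number of LR fillings of θ/μ of type ν equals the number of LR fillings of (θ − 1^k)/(μ − 1^k) of type ν; consequently c_{μν}^θ = c_{(μ−1^k) ν}^{(θ−1^k)}. -/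
/-- A partition with `n` (possibly zero) parts: a weakly decreasing sequence of
nonnegative integers, recorded 0-indexed, vanishing from index `n` on. -/
def IsPartitionN (n : ℕ) (μ : ℕ → ℕ) : Prop :=
  Antitone μ ∧ ∀ i, n ≤ i → μ i = 0

/-- A partition (finitely many nonzero parts), 0-indexed. -/
def IsPartition (μ : ℕ → ℕ) : Prop :=
  Antitone μ ∧ ∃ N, ∀ i, N ≤ i → μ i = 0

/-- `λ(μ,ν)_k = μ_k − k + #{j : 1 ≤ j ≤ n, ν_j − j ≥ μ_k − k}`, 0-indexed,
so the (k+1)-st part of `λ(μ,ν)`, as an integer. -/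
def lamStar (n : ℕ) (μ ν : ℕ → ℕ) (k : ℕ) : ℤ :=
  (μ k : ℤ) - (k + 1) +
    ((Finset.range n).filter (fun j => (μ k : ℤ) - (k + 1) ≤ (ν j : ℤ) - (j + 1))).card

/-- `ρ(μ,ν)_j = ν_j − j + 1 + #{k : 1 ≤ k ≤ n, μ_k − k > ν_j − j}`, 0-indexed. -/
def rhoStar (n : ℕ) (μ ν : ℕ → ℕ) (j : ℕ) : ℤ :=
  (ν j : ℤ) - (j + 1) + 1 +
    ((Finset.range n).filter (fun k => (ν j : ℤ) - (j + 1) < (μ k : ℤ) - (k + 1))).card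

/-- `λ(μ,ν)` as a sequence of natural numbers. -/
def lamStarN (n : ℕ) (μ ν : ℕ → ℕ) (k : ℕ) : ℕ := (lamStar n μ ν k).toNat

/-- `ρ(μ,ν)` as a sequence of natural numbers. -/
def rhoStarN (n : ℕ) (μ ν : ℕ → ℕ) (k : ℕ) : ℕ := (rhoStar n μ ν k).toNat

/-- The conjugate partition: `μ′_i = #{k : μ_k ≥ i}` (1-indexed), recorded 0-indexed. -/
noncomputable def conjP (μ : ℕ → ℕ) (i : ℕ) : ℕ := {k : ℕ | i + 1 ≤ μ k}.ncard

/-- Remove a full column of height `k`: subtract 1 from the first `k` parts. -/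
def removeCol (k : ℕ) (σ : ℕ → ℕ) : ℕ → ℕ := fun j => if j < k then σ j - 1 else σ j

/-- An LR filling of the skew shape `θ/ν` of type `μ` (all 0-indexed; cell `(i,j)`
is row `i+1`, column `j+1`; the entry `0` marks cells outside the skew shape).
Rows weakly increase, columns strictly increase, the entry `m+1` occurs `μ m`
times, and the reverse reading word (rows top to bottom, each row right to left)
is a lattice permutation. It is required that `ν ⊆ θ`. -/
def IsLRFilling (θ ν μ : ℕ → ℕ) (T : ℕ → ℕ → ℕ) : Prop :=
  (∀ i, ν i ≤ θ i) ∧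
  (∀ i j, ν i ≤ j → j < θ i → 1 ≤ T i j) ∧
  (∀ i j, ¬(ν i ≤ j ∧ j < θ i) → T i j = 0) ∧
  (∀ i j j', ν i ≤ j → j ≤ j' → j' < θ i → T i j ≤ T i j') ∧
  (∀ i i' j, i < i' → ν i ≤ j → j < θ i → ν i' ≤ j → j < θ i' → T i j < T i' j) ∧
  (∀ m : ℕ, {p : ℕ × ℕ | T p.1 p.2 = m + 1}.ncard = μ m) ∧
  (∀ m i j : ℕ,
    {p : ℕ × ℕ | T p.1 p.2 = m + 2 ∧ (p.1 < i ∨ (p.1 = i ∧ j ≤ p.2))}.ncard ≤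
    {p : ℕ × ℕ | T p.1 p.2 = m + 1 ∧ (p.1 < i ∨ (p.1 = i ∧ j ≤ p.2))}.ncard)

/-- The Littlewood–Richardson coefficient `c_{μν}^θ`: the number of LR fillings
of `θ/ν` of type `μ` (equal to `0` when `ν ⊄ θ`). -/
noncomputable def lrCoeff (μ ν θ : ℕ → ℕ) : ℕ := Nat.card {T : ℕ → ℕ → ℕ // IsLRFilling θ ν μ T}
open Set

section LRInfra

variable {θ ν μ : ℕ → ℕ} {T : ℕ → ℕ → ℕ}

/-- Any set of cells carrying nonzero entries is finite. -/
lemma fin_nonzero (hθa : Antitone θ) (hθN : ∃ N, ∀ i, N ≤ i → θ i = 0)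
    (h3 : ∀ i j, ¬(ν i ≤ j ∧ j < θ i) → T i j = 0)
    (P : ℕ × ℕ → Prop) (hP : ∀ p, P p → T p.1 p.2 ≠ 0) :
    {p : ℕ × ℕ | P p}.Finite := by
  obtain ⟨N, hN⟩ := hθN
  apply Set.Finite.subset ((Set.finite_Iio N).prod (Set.finite_Iio (θ 0)))
  rintro ⟨i, j⟩ hp
  have h0 := hP _ hp
  have hsh : ν i ≤ j ∧ j < θ i := by
    by_contra hc; exact h0 (h3 i j hc)
  refine ⟨?_, ?_⟩
  · simp only [Set.mem_Iio]
    by_contra hc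
    push_neg at hc
    rw [hN i hc] at hsh
    omega
  · simp only [Set.mem_Iio]
    exact lt_of_lt_of_le hsh.2 (hθa (Nat.zero_le i))

lemma shape_of_ne (h3 : ∀ i j, ¬(ν i ≤ j ∧ j < θ i) → T i j = 0)
    {i j : ℕ} (h : T i j ≠ 0) : ν i ≤ j ∧ j < θ i := by
  by_contra hc; exact h (h3 i j hc)

/-- Fact F : the row-wise lattice property. -/
lemma factF (hθa : Antitone θ) (hθN : ∃ N, ∀ i, N ≤ i → θ i = 0)
    (hT : IsLRFilling θ ν μ T) (m r : ℕ) :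
    {p : ℕ × ℕ | T p.1 p.2 = m + 2 ∧ p.1 ≤ r}.ncard ≤
    {p : ℕ × ℕ | T p.1 p.2 = m + 1 ∧ p.1 < r}.ncard := by
  obtain ⟨h1, h2, h3, h4, h5, h6, h7⟩ := hT
  have hfin := fin_nonzero hθa hθN h3
  by_cases hne : {p : ℕ × ℕ | T p.1 p.2 = m + 2 ∧ p.1 ≤ r}.Nonempty
  · obtain ⟨⟨i0, j0⟩, hv0, hr0⟩ := hne
    set S : Set ℕ := {i | i ≤ r ∧ ∃ j, T i j = m + 2} with hS
    have hSne : S.Nonempty := ⟨i0, hr0, j0, hv0⟩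
    have hSbdd : BddAbove S := ⟨r, fun i hi => hi.1⟩
    set R := sSup S with hR
    have hRmem : R ∈ S := Nat.sSup_mem hSne hSbdd
    obtain ⟨hRr, jR, hjR⟩ := hRmem
    set C := sInf {j | T R j = m + 2} with hC
    have hCmem : T R C = m + 2 := Nat.sInf_mem (⟨jR, hjR⟩ : {j | T R j = m + 2}.Nonempty)
    have hsub1 : {p : ℕ × ℕ | T p.1 p.2 = m + 2 ∧ p.1 ≤ r} ⊆
        {p : ℕ × ℕ | T p.1 p.2 = m + 2 ∧ (p.1 < R ∨ (p.1 = R ∧ C ≤ p.2))} := by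
      rintro ⟨i, j⟩ ⟨hv, hir⟩
      have hiR : i ≤ R := le_csSup hSbdd ⟨hir, j, hv⟩
      refine ⟨hv, ?_⟩
      rcases lt_or_eq_of_le hiR with h | h
      · exact Or.inl h
      · refine Or.inr ⟨h, ?_⟩
        have : T R j = m + 2 := by rw [← h]; exact hv
        exact Nat.sInf_le this
    have hsub2 : {p : ℕ × ℕ | T p.1 p.2 = m + 1 ∧ (p.1 < R ∨ (p.1 = R ∧ C ≤ p.2))} ⊆
        {p : ℕ × ℕ | T p.1 p.2 = m + 1 ∧ p.1 < r} := by
      rintro ⟨i, j⟩ ⟨hv, hpre⟩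
      dsimp only at hv
      refine ⟨hv, ?_⟩
      rcases hpre with h | ⟨hi, hj⟩
      · exact lt_of_lt_of_le h hRr
      · exfalso
        dsimp only at hi hj
        rw [hi] at hv
        have hshC := shape_of_ne h3 (show T R C ≠ 0 by rw [hCmem]; omega)
        have hshj := shape_of_ne h3 (show T R j ≠ 0 by rw [hv]; omega)
        have hmono := h4 R C j hshC.1 hj hshj.2
        rw [hCmem, hv] at hmono
        omega
    calc {p : ℕ × ℕ | T p.1 p.2 = m + 2 ∧ p.1 ≤ r}.ncard
        ≤ {p : ℕ × ℕ | T p.1 p.2 = m + 2 ∧ (p.1 < R ∨ (p.1 = R ∧ C ≤ p.2))}.ncard :=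
          Set.ncard_le_ncard hsub1 (hfin _ (fun p hp => by rw [hp.1]; omega))
      _ ≤ {p : ℕ × ℕ | T p.1 p.2 = m + 1 ∧ (p.1 < R ∨ (p.1 = R ∧ C ≤ p.2))}.ncard := h7 m R C
      _ ≤ {p : ℕ × ℕ | T p.1 p.2 = m + 1 ∧ p.1 < r}.ncard := by
          have heq : {p : ℕ × ℕ | T p.1 p.2 = m + 1 ∧ (p.1 < R ∨ (p.1 = R ∧ C ≤ p.2))} =
              {p : ℕ × ℕ | T p.1 p.2 = m + 1 ∧ p.1 < r} ∩
              {p : ℕ × ℕ | T p.1 p.2 = m + 1 ∧ (p.1 < R ∨ (p.1 = R ∧ C ≤ p.2))} := by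
            apply Set.eq_of_subset_of_subset
            · exact fun p hp => ⟨hsub2 hp, hp⟩
            · exact fun p hp => hp.2
          rw [heq]
          exact Set.ncard_le_ncard Set.inter_subset_left
            (hfin _ (fun p hp => by rw [hp.1]; omega))
  · rw [Set.not_nonempty_iff_eq_empty] at hne
    rw [hne]
    simp

/-- Entries exceed the (0-indexed) row index by at most one. -/
lemma entry_le (hθa : Antitone θ) (hθN : ∃ N, ∀ i, N ≤ i → θ i = 0)
    (hT : IsLRFilling θ ν μ T) : ∀ i j, T i j ≤ i + 1 := by
  have key : ∀ m r, r ≤ m → {p : ℕ × ℕ | T p.1 p.2 = m + 2 ∧ p.1 ≤ r} = ∅ := by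
    intro m
    induction m with
    | zero =>
      intro r hr
      have h := factF hθa hθN hT 0 r
      have h0 : {p : ℕ × ℕ | T p.1 p.2 = 0 + 1 ∧ p.1 < r} = ∅ := by
        ext p
        simp only [Set.mem_setOf_eq, Set.mem_empty_iff_false, iff_false, not_and]
        omega
      rw [h0, Set.ncard_empty] at h
      have hfin := fin_nonzero hθa hθN hT.2.2.1
        (fun (p : ℕ × ℕ) => T p.1 p.2 = 0 + 2 ∧ p.1 ≤ r)
        (fun p hp => by rw [hp.1]; omega)
      exact (Set.ncard_eq_zero hfin).mp (Nat.le_zero.mp h)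
    | succ m ih =>
      intro r hr
      have h := factF hθa hθN hT (m + 1) r
      have h0 : {p : ℕ × ℕ | T p.1 p.2 = m + 1 + 1 ∧ p.1 < r} = ∅ := by
        ext p
        simp only [Set.mem_setOf_eq, Set.mem_empty_iff_false, iff_false, not_and]
        intro hv hlt
        have hcon : p ∈ {q : ℕ × ℕ | T q.1 q.2 = m + 2 ∧ q.1 ≤ m} := ⟨hv, by omega⟩
        rw [ih m le_rfl] at hcon
        exact hcon
      rw [h0, Set.ncard_empty] at h
      have hfin := fin_nonzero hθa hθN hT.2.2.1
        (fun (p : ℕ × ℕ) => T p.1 p.2 = m + 1 + 2 ∧ p.1 ≤ r)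
        (fun p hp => by rw [hp.1]; omega)
      exact (Set.ncard_eq_zero hfin).mp (Nat.le_zero.mp h)
  intro i j
  by_contra hc
  push_neg at hc
  have hmem : ((i, j) : ℕ × ℕ) ∈
      {p : ℕ × ℕ | T p.1 p.2 = (T i j - 2) + 2 ∧ p.1 ≤ T i j - 2} := by
    simp only [Set.mem_setOf_eq]
    omega
  rw [key (T i j - 2) (T i j - 2) le_rfl] at hmem
  exact hmem

end LRInfra

/-- Generic: the row-wise lattice property implies the prefix lattice property. -/
lemma lattice_of_F {T : ℕ → ℕ → ℕ}
    (hfin : ∀ P : ℕ × ℕ → Prop, (∀ p, P p → T p.1 p.2 ≠ 0) → {p : ℕ × ℕ | P p}.Finite)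
    (hF : ∀ m r, {p : ℕ × ℕ | T p.1 p.2 = m + 2 ∧ p.1 ≤ r}.ncard ≤
        {p : ℕ × ℕ | T p.1 p.2 = m + 1 ∧ p.1 < r}.ncard) :
    ∀ m i j : ℕ,
      {p : ℕ × ℕ | T p.1 p.2 = m + 2 ∧ (p.1 < i ∨ (p.1 = i ∧ j ≤ p.2))}.ncard ≤
      {p : ℕ × ℕ | T p.1 p.2 = m + 1 ∧ (p.1 < i ∨ (p.1 = i ∧ j ≤ p.2))}.ncard := by
  intro m i j
  calc {p : ℕ × ℕ | T p.1 p.2 = m + 2 ∧ (p.1 < i ∨ (p.1 = i ∧ j ≤ p.2))}.ncard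
      ≤ {p : ℕ × ℕ | T p.1 p.2 = m + 2 ∧ p.1 ≤ i}.ncard := by
        apply Set.ncard_le_ncard
        · rintro ⟨a, b⟩ ⟨hv, hpre⟩
          exact ⟨hv, by rcases hpre with h | ⟨h, _⟩ <;> omega⟩
        · exact hfin _ (fun p hp => by rw [hp.1]; omega)
    _ ≤ {p : ℕ × ℕ | T p.1 p.2 = m + 1 ∧ p.1 < i}.ncard := hF m i
    _ ≤ {p : ℕ × ℕ | T p.1 p.2 = m + 1 ∧ (p.1 < i ∨ (p.1 = i ∧ j ≤ p.2))}.ncard := by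
        apply Set.ncard_le_ncard
        · rintro ⟨a, b⟩ ⟨hv, hpre⟩
          exact ⟨hv, Or.inl hpre⟩
        · exact hfin _ (fun p hp => by rw [hp.1]; omega)

lemma ncard_Iio (n : ℕ) : (Set.Iio n).ncard = n := by
  rw [← Finset.coe_range, Set.ncard_coe_finset, Finset.card_range]

/-- In any LR filling, at most `θ r` cells of a fixed (nonzero) value lie in
rows `≥ r` (they occupy distinct columns, all `< θ r`). -/
lemma count_rows_ge {θ ν μ : ℕ → ℕ} {T : ℕ → ℕ → ℕ}
    (hθa : Antitone θ) (hT : IsLRFilling θ ν μ T) (v r : ℕ) :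
    {p : ℕ × ℕ | T p.1 p.2 = v + 1 ∧ r ≤ p.1}.ncard ≤ θ r := by
  obtain ⟨h1, h2, h3, h4, h5, h6, h7⟩ := hT
  set s := {p : ℕ × ℕ | T p.1 p.2 = v + 1 ∧ r ≤ p.1} with hs
  have hinj : Set.InjOn Prod.snd s := by
    rintro ⟨a, b⟩ ⟨ha, hb⟩ ⟨c, d⟩ ⟨hc, hd⟩ h
    dsimp only at ha hc h ⊢
    subst h
    have hsa := shape_of_ne h3 (show T a b ≠ 0 by omega)
    have hsc := shape_of_ne h3 (show T c b ≠ 0 by omega)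
    rcases lt_trichotomy a c with hlt | heq | hgt
    · have := h5 a c b hlt hsa.1 hsa.2 hsc.1 hsc.2; omega
    · rw [heq]
    · have := h5 c a b hgt hsc.1 hsc.2 hsa.1 hsa.2; omega
  have himg : Prod.snd '' s ⊆ Set.Iio (θ r) := by
    rintro x ⟨⟨a, b⟩, ⟨ha, hb⟩, rfl⟩
    dsimp only at ha hb ⊢
    have hsa := shape_of_ne h3 (show T a b ≠ 0 by omega)
    exact lt_of_lt_of_le hsa.2 (hθa hb)
  calc s.ncard = (Prod.snd '' s).ncard := (Set.ncard_image_of_injOn hinj).symm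
    _ ≤ (Set.Iio (θ r)).ncard := Set.ncard_le_ncard himg (Set.finite_Iio _)
    _ = θ r := ncard_Iio _

/-- Left shift of the first `k` rows. -/
def shL (k : ℕ) (T : ℕ → ℕ → ℕ) : ℕ → ℕ → ℕ :=
  fun i j => if i < k then T i (j + 1) else T i j

/-- Right shift of the first `k` rows. -/
def shR (k : ℕ) (T : ℕ → ℕ → ℕ) : ℕ → ℕ → ℕ :=
  fun i j => if i < k then (if j = 0 then 0 else T i (j - 1)) else T i j

def eMap (k : ℕ) : ℕ × ℕ → ℕ × ℕ := fun p => (p.1, if p.1 < k then p.2 + 1 else p.2)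

lemma eMap_inj (k : ℕ) : Function.Injective (eMap k) := by
  rintro ⟨a, b⟩ ⟨c, d⟩ h
  simp only [eMap, Prod.mk.injEq] at h
  obtain ⟨h1, h2⟩ := h
  subst h1
  by_cases ha : a < k <;> simp [ha] at h2 <;> simp [h2]

lemma image_shL {k v : ℕ} {T : ℕ → ℕ → ℕ} (R : ℕ → Prop)
    (hpos : ∀ i j, i < k → T i j = v + 1 → 1 ≤ j) :
    eMap k '' {p : ℕ × ℕ | shL k T p.1 p.2 = v + 1 ∧ R p.1}
      = {p : ℕ × ℕ | T p.1 p.2 = v + 1 ∧ R p.1} := by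
  ext ⟨i, j⟩
  simp only [Set.mem_image, Set.mem_setOf_eq, eMap, shL, Prod.mk.injEq, Prod.exists]
  constructor
  · rintro ⟨a, b, ⟨hv, hR⟩, h1, h2⟩
    subst h1
    by_cases ha : a < k
    · rw [if_pos ha] at hv h2
      rw [← h2]
      exact ⟨hv, hR⟩
    · rw [if_neg ha] at hv h2
      rw [← h2]
      exact ⟨hv, hR⟩
  · rintro ⟨hv, hR⟩
    by_cases hi : i < k
    · have hj : 1 ≤ j := hpos i j hi hv
      refine ⟨i, j - 1, ⟨?_, hR⟩, rfl, ?_⟩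
      · rw [if_pos hi, Nat.sub_add_cancel hj]
        exact hv
      · rw [if_pos hi, Nat.sub_add_cancel hj]
    · exact ⟨i, j, ⟨by rw [if_neg hi]; exact hv, hR⟩, rfl, by rw [if_neg hi]⟩

lemma image_shR {k v : ℕ} {T : ℕ → ℕ → ℕ} (R : ℕ → Prop) :
    eMap k '' {p : ℕ × ℕ | T p.1 p.2 = v + 1 ∧ R p.1}
      = {p : ℕ × ℕ | shR k T p.1 p.2 = v + 1 ∧ R p.1} := by
  ext ⟨i, j⟩
  simp only [Set.mem_image, Set.mem_setOf_eq, eMap, shR, Prod.mk.injEq, Prod.exists]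
  constructor
  · rintro ⟨a, b, ⟨hv, hR⟩, h1, h2⟩
    subst h1
    by_cases ha : a < k
    · rw [if_pos ha] at h2 ⊢
      rw [← h2]
      rw [if_neg (by omega : ¬ (b + 1 = 0))]
      simpa using ⟨hv, hR⟩
    · rw [if_neg ha] at h2 ⊢
      rw [← h2]
      exact ⟨hv, hR⟩
  · rintro ⟨hv, hR⟩
    by_cases hi : i < k
    · rw [if_pos hi] at hv
      have hj : j ≠ 0 := by
        intro h
        rw [if_pos h] at hv
        omega
      rw [if_neg hj] at hv
      exact ⟨i, j - 1, ⟨hv, hR⟩, rfl, by rw [if_pos hi]; omega⟩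
    · rw [if_neg hi] at hv
      exact ⟨i, j, ⟨hv, hR⟩, rfl, by rw [if_neg hi]⟩

lemma ncard_shL {k v : ℕ} {T : ℕ → ℕ → ℕ} (R : ℕ → Prop)
    (hpos : ∀ i j, i < k → T i j = v + 1 → 1 ≤ j) :
    {p : ℕ × ℕ | shL k T p.1 p.2 = v + 1 ∧ R p.1}.ncard
      = {p : ℕ × ℕ | T p.1 p.2 = v + 1 ∧ R p.1}.ncard := by
  rw [← image_shL R hpos, Set.ncard_image_of_injective _ (eMap_inj k)]

lemma ncard_shR {k v : ℕ} {T : ℕ → ℕ → ℕ} (R : ℕ → Prop) :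
    {p : ℕ × ℕ | shR k T p.1 p.2 = v + 1 ∧ R p.1}.ncard
      = {p : ℕ × ℕ | T p.1 p.2 = v + 1 ∧ R p.1}.ncard := by
  rw [← image_shR R, Set.ncard_image_of_injective _ (eMap_inj k)]

section EasyDir

variable {μ θ : ℕ → ℕ} {k : ℕ}

lemma removeCol_theta_part (hμ : IsPartition μ) (hθ : IsPartition θ)
    (hk : 1 ≤ k) (hfull1 : μ (k - 1) ≤ θ (k - 1)) (hfull2 : θ k < μ (k - 1)) :
    IsPartition (removeCol k θ) := by
  have hθa := hθ.1
  have hθk : ∀ i, i < k → θ k + 1 ≤ θ i := fun i hi =>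
    le_trans (le_trans (by omega) hfull1) (hθa (by omega : i ≤ k - 1))
  constructor
  · intro i j hij
    by_cases hi : i < k <;> by_cases hj : j < k <;>
      simp only [removeCol, hi, hj, if_true, if_false, ite_true, ite_false]
    · have := hθa hij; omega
    · have h1 := hθk i hi
      have h2 := hθa (show k ≤ j by omega)
      omega
    · omega
    · exact hθa hij
  · obtain ⟨N, hN⟩ := hθ.2
    refine ⟨max N k, fun i hi => ?_⟩
    have h1 : ¬ i < k := by omega
    simp only [removeCol, h1, ite_false]
    exact hN i (by omega)

lemma removeCol_mu_part (hμ : IsPartition μ) (hθ : IsPartition θ) (hsub : ∀ i, μ i ≤ θ i)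
    (hk : 1 ≤ k) (hfull1 : μ (k - 1) ≤ θ (k - 1)) (hfull2 : θ k < μ (k - 1)) :
    IsPartition (removeCol k μ) := by
  have hμa := hμ.1
  have hμk : ∀ i, i < k → θ k + 1 ≤ μ i := fun i hi =>
    le_trans (by omega) (hμa (by omega : i ≤ k - 1))
  constructor
  · intro i j hij
    by_cases hi : i < k <;> by_cases hj : j < k <;>
      simp only [removeCol, hi, hj, if_true, if_false, ite_true, ite_false]
    · have := hμa hij; omega
    · have h1 := hμk i hi
      have h2 := hμa (show k ≤ j by omega)
      have h3 := hsub k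
      omega
    · omega
    · exact hμa hij
  · obtain ⟨N, hN⟩ := hμ.2
    refine ⟨max N k, fun i hi => ?_⟩
    have h1 : ¬ i < k := by omega
    simp only [removeCol, h1, ite_false]
    exact hN i (by omega)

lemma pres_shL (hμ : IsPartition μ) (hθ : IsPartition θ) (hsub : ∀ i, μ i ≤ θ i)
    (hk : 1 ≤ k) (hfull1 : μ (k - 1) ≤ θ (k - 1)) (hfull2 : θ k < μ (k - 1))
    (ν : ℕ → ℕ) {T : ℕ → ℕ → ℕ} (hT : IsLRFilling θ μ ν T) :
    IsLRFilling (removeCol k θ) (removeCol k μ) ν (shL k T) := by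
  have h1 := hT.1
  have h2 := hT.2.1
  have h3 := hT.2.2.1
  have h4 := hT.2.2.2.1
  have h5 := hT.2.2.2.2.1
  have h6 := hT.2.2.2.2.2.1
  have hμa := hμ.1
  have hθa := hθ.1
  have hμk : ∀ i, i < k → θ k + 1 ≤ μ i := fun i hi =>
    le_trans (by omega) (hμa (by omega : i ≤ k - 1))
  have hθk : ∀ i, i < k → θ k + 1 ≤ θ i := fun i hi =>
    le_trans (le_trans (by omega) hfull1) (hθa (by omega : i ≤ k - 1))
  have hpos : ∀ v, ∀ i j, i < k → T i j = v + 1 → 1 ≤ j := by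
    intro v i j hi hv
    have hs := (shape_of_ne h3 (show T i j ≠ 0 by omega)).1
    have := hμk i hi
    omega
  have c3 : ∀ i j, ¬(removeCol k μ i ≤ j ∧ j < removeCol k θ i) → shL k T i j = 0 := by
    intro i j hn
    by_cases hi : i < k
    · simp only [removeCol, hi, ite_true] at hn
      simp only [shL, hi, ite_true]
      apply h3
      have := hμk i hi; have := hθk i hi
      omega
    · simp only [removeCol, hi, ite_false] at hn
      simp only [shL, hi, ite_false]
      exact h3 i j hn
  have hpartθ' := removeCol_theta_part hμ hθ hk hfull1 hfull2
  have hfin' := fin_nonzero hpartθ'.1 hpartθ'.2 c3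
  refine ⟨?_, ?_, c3, ?_, ?_, ?_, ?_⟩
  · intro i
    by_cases hi : i < k <;> simp only [removeCol, hi, ite_true, ite_false]
    · have := hsub i; omega
    · exact hsub i
  · intro i j hj1 hj2
    by_cases hi : i < k
    · simp only [removeCol, hi, ite_true] at hj1 hj2
      simp only [shL, hi, ite_true]
      have := hμk i hi; have := hθk i hi
      exact h2 i (j + 1) (by omega) (by omega)
    · simp only [removeCol, hi, ite_false] at hj1 hj2
      simp only [shL, hi, ite_false]
      exact h2 i j hj1 hj2
  · intro i j j' hj hjj' hj'
    by_cases hi : i < k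
    · simp only [removeCol, hi, ite_true] at hj hj'
      simp only [shL, hi, ite_true]
      have := hμk i hi; have := hθk i hi
      exact h4 i (j + 1) (j' + 1) (by omega) (by omega) (by omega)
    · simp only [removeCol, hi, ite_false] at hj hj'
      simp only [shL, hi, ite_false]
      exact h4 i j j' hj hjj' hj'
  · intro i i' j hii' hj1 hj2 hj3 hj4
    by_cases hi : i < k <;> by_cases hi' : i' < k <;>
      simp only [removeCol, hi, hi', ite_true, ite_false] at hj1 hj2 hj3 hj4 <;>
      simp only [shL, hi, hi', ite_true, ite_false]
    · have := hμk i hi; have := hθk i hi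
      have := hμk i' hi'; have := hθk i' hi'
      exact h5 i i' (j + 1) hii' (by omega) (by omega) (by omega) (by omega)
    · exfalso
      have hb1 := hμk i hi
      have hb2 := hθa (show k ≤ i' by omega)
      omega
    · omega
    · exact h5 i i' j hii' hj1 hj2 hj3 hj4
  · intro m
    have h := ncard_shL (k := k) (v := m) (T := T) (fun _ => True) (hpos m)
    have e1 : {p : ℕ × ℕ | shL k T p.1 p.2 = m + 1} =
        {p : ℕ × ℕ | shL k T p.1 p.2 = m + 1 ∧ True} := by ext p; simp
    have e2 : {p : ℕ × ℕ | T p.1 p.2 = m + 1} =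
        {p : ℕ × ℕ | T p.1 p.2 = m + 1 ∧ True} := by ext p; simp
    rw [e1]
    calc {p : ℕ × ℕ | shL k T p.1 p.2 = m + 1 ∧ True}.ncard
        = {p : ℕ × ℕ | T p.1 p.2 = m + 1 ∧ True}.ncard := h
      _ = ν m := by rw [← e2]; exact h6 m
  · apply lattice_of_F hfin'
    intro m r
    calc {p : ℕ × ℕ | shL k T p.1 p.2 = m + 2 ∧ p.1 ≤ r}.ncard
        = {p : ℕ × ℕ | T p.1 p.2 = m + 2 ∧ p.1 ≤ r}.ncard :=
          ncard_shL (fun x => x ≤ r) (hpos (m + 1))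
      _ ≤ {p : ℕ × ℕ | T p.1 p.2 = m + 1 ∧ p.1 < r}.ncard := factF hθa hθ.2 hT m r
      _ = {p : ℕ × ℕ | shL k T p.1 p.2 = m + 1 ∧ p.1 < r}.ncard :=
          (ncard_shL (fun x => x < r) (hpos m)).symm

lemma pres_shR (hμ : IsPartition μ) (hθ : IsPartition θ) (hsub : ∀ i, μ i ≤ θ i)
    (hk : 1 ≤ k) (hfull1 : μ (k - 1) ≤ θ (k - 1)) (hfull2 : θ k < μ (k - 1))
    (ν : ℕ → ℕ) {T : ℕ → ℕ → ℕ}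
    (hT : IsLRFilling (removeCol k θ) (removeCol k μ) ν T) :
    IsLRFilling θ μ ν (shR k T) := by
  have h1 := hT.1
  have h2 := hT.2.1
  have h3 := hT.2.2.1
  have h4 := hT.2.2.2.1
  have h5 := hT.2.2.2.2.1
  have h6 := hT.2.2.2.2.2.1
  have hμa := hμ.1
  have hθa := hθ.1
  have hμk : ∀ i, i < k → θ k + 1 ≤ μ i := fun i hi =>
    le_trans (by omega) (hμa (by omega : i ≤ k - 1))
  have hθk : ∀ i, i < k → θ k + 1 ≤ θ i := fun i hi =>
    le_trans (le_trans (by omega) hfull1) (hθa (by omega : i ≤ k - 1))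
  have hpartθ' := removeCol_theta_part hμ hθ hk hfull1 hfull2
  have c3 : ∀ i j, ¬(μ i ≤ j ∧ j < θ i) → shR k T i j = 0 := by
    intro i j hn
    by_cases hi : i < k
    · simp only [shR, hi, ite_true]
      by_cases hj : j = 0
      · rw [if_pos hj]
      · rw [if_neg hj]
        apply h3
        simp only [removeCol, hi, ite_true]
        have := hμk i hi; have := hθk i hi
        omega
    · simp only [shR, hi, ite_false]
      apply h3
      simp only [removeCol, hi, ite_false]
      exact hn
  have hfin' := fin_nonzero hθa hθ.2 c3
  refine ⟨?_, ?_, c3, ?_, ?_, ?_, ?_⟩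
  · exact hsub
  · intro i j hj1 hj2
    by_cases hi : i < k
    · have hb := hμk i hi
      simp only [shR, hi, ite_true, if_neg (show j ≠ 0 by omega)]
      apply h2
      · simp only [removeCol, hi, ite_true]; omega
      · simp only [removeCol, hi, ite_true]; omega
    · simp only [shR, hi, ite_false]
      apply h2 <;> simp only [removeCol, hi, ite_false]
      · exact hj1
      · exact hj2
  · intro i j j' hj hjj' hj'
    by_cases hi : i < k
    · have hb := hμk i hi
      have hg1 : shR k T i j = T i (j - 1) := by
        simp only [shR, hi, ite_true]
        rw [if_neg (show j ≠ 0 by omega)]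
      have hg2 : shR k T i j' = T i (j' - 1) := by
        simp only [shR, hi, ite_true]
        rw [if_neg (show j' ≠ 0 by omega)]
      rw [hg1, hg2]
      exact h4 i (j - 1) (j' - 1) (by simp only [removeCol, hi, ite_true]; omega)
        (by omega) (by simp only [removeCol, hi, ite_true]; omega)
    · simp only [shR, hi, ite_false]
      exact h4 i j j' (by simpa [removeCol, hi] using hj) hjj'
        (by simpa [removeCol, hi] using hj')
  · intro i i' j hii' hj1 hj2 hj3 hj4
    by_cases hi : i < k <;> by_cases hi' : i' < k <;>
      simp only [shR, hi, hi', ite_true, ite_false]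
    · have hb := hμk i hi
      have hb' := hμk i' hi'
      rw [if_neg (show j ≠ 0 by omega), if_neg (show j ≠ 0 by omega)]
      apply h5 i i' (j - 1) hii' <;> simp only [removeCol, hi, hi', ite_true] <;> omega
    · exfalso
      have hb1 := hμk i hi
      have hb2 := hθa (show k ≤ i' by omega)
      omega
    · omega
    · exact h5 i i' j hii' (by simpa [removeCol, hi] using hj1)
        (by simpa [removeCol, hi] using hj2)
        (by simpa [removeCol, hi'] using hj3)
        (by simpa [removeCol, hi'] using hj4)
  · intro m
    have h := ncard_shR (k := k) (v := m) (T := T) (fun _ => True)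
    have e1 : {p : ℕ × ℕ | shR k T p.1 p.2 = m + 1} =
        {p : ℕ × ℕ | shR k T p.1 p.2 = m + 1 ∧ True} := by ext p; simp
    have e2 : {p : ℕ × ℕ | T p.1 p.2 = m + 1} =
        {p : ℕ × ℕ | T p.1 p.2 = m + 1 ∧ True} := by ext p; simp
    rw [e1]
    calc {p : ℕ × ℕ | shR k T p.1 p.2 = m + 1 ∧ True}.ncard
        = {p : ℕ × ℕ | T p.1 p.2 = m + 1 ∧ True}.ncard := h
      _ = ν m := by rw [← e2]; exact h6 m
  · apply lattice_of_F (fin_nonzero hθa hθ.2 c3)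
    intro m r
    calc {p : ℕ × ℕ | shR k T p.1 p.2 = m + 2 ∧ p.1 ≤ r}.ncard
        = {p : ℕ × ℕ | T p.1 p.2 = m + 2 ∧ p.1 ≤ r}.ncard :=
          ncard_shR (fun x => x ≤ r)
      _ ≤ {p : ℕ × ℕ | T p.1 p.2 = m + 1 ∧ p.1 < r}.ncard :=
          factF hpartθ'.1 hpartθ'.2 hT m r
      _ = {p : ℕ × ℕ | shR k T p.1 p.2 = m + 1 ∧ p.1 < r}.ncard :=
          (ncard_shR (fun x => x < r)).symm

lemma easy_card (hμ : IsPartition μ) (hθ : IsPartition θ) (hsub : ∀ i, μ i ≤ θ i)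
    (hk : 1 ≤ k) (hfull1 : μ (k - 1) ≤ θ (k - 1)) (hfull2 : θ k < μ (k - 1))
    (ν : ℕ → ℕ) :
    Nat.card {T : ℕ → ℕ → ℕ // IsLRFilling θ μ ν T} =
    Nat.card {T : ℕ → ℕ → ℕ // IsLRFilling (removeCol k θ) (removeCol k μ) ν T} := by
  have hμk : ∀ i, i < k → θ k + 1 ≤ μ i := fun i hi =>
    le_trans (by omega) (hμ.1 (by omega : i ≤ k - 1))
  apply Nat.card_congr
  refine ⟨fun T => ⟨shL k T.1, pres_shL hμ hθ hsub hk hfull1 hfull2 ν T.2⟩,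
          fun T => ⟨shR k T.1, pres_shR hμ hθ hsub hk hfull1 hfull2 ν T.2⟩, ?_, ?_⟩
  · rintro ⟨T, hT⟩
    apply Subtype.ext
    dsimp only
    funext i j
    by_cases hi : i < k
    · simp only [shR, hi, ite_true]
      by_cases hj : j = 0
      · rw [if_pos hj, hj]
        have : T i 0 = 0 := by
          apply hT.2.2.1
          have := hμk i hi
          omega
        omega
      · rw [if_neg hj]
        simp only [shL, hi, ite_true]
        congr 1
        omega
    · simp only [shR, hi, ite_false, shL]
  · rintro ⟨T, hT⟩
    apply Subtype.ext
    dsimp only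
    funext i j
    by_cases hi : i < k
    · simp only [shL, hi, ite_true, shR, if_neg (show j + 1 ≠ 0 by omega)]
      congr 1
    · simp only [shL, hi, ite_false, shR]

end EasyDir

section HardDir

variable {μ θ : ℕ → ℕ} {k : ℕ}

lemma row_last (hμ : IsPartition μ) (hθ : IsPartition θ) (hsub : ∀ i, μ i ≤ θ i)
    (hk : 1 ≤ k) (hfull1 : μ (k - 1) ≤ θ (k - 1)) (hfull2 : θ k < μ (k - 1))
    (ν : ℕ → ℕ) {T : ℕ → ℕ → ℕ} (hT : IsLRFilling θ ν μ T) :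
    ∀ i, i < k → ν i ≤ θ i - 1 ∧ 1 ≤ θ i ∧ T i (θ i - 1) = i + 1 := by
  have h2 := hT.2.1
  have h3 := hT.2.2.1
  have h4 := hT.2.2.2.1
  have h6 := hT.2.2.2.2.2.1
  have hθa := hθ.1
  have hent := entry_le hθa hθ.2 hT
  have hfin := fin_nonzero hθa hθ.2 h3
  intro i hik
  have hEx : ∃ j, T i j = i + 1 := by
    by_contra hno
    push_neg at hno
    have hemp : ∀ t, {p : ℕ × ℕ | T p.1 p.2 = i + t + 1 ∧ p.1 ≤ i + t} = ∅ := by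
      intro t
      induction t with
      | zero =>
        ext ⟨a, b⟩
        simp only [Set.mem_setOf_eq, Set.mem_empty_iff_false, iff_false, not_and]
        intro hv hle
        have hub := hent a b
        have ha : a = i := by omega
        rw [ha] at hv
        exact absurd (by omega : T i b = i + 1) (hno b)
      | succ t ih =>
        have hRHS : {p : ℕ × ℕ | T p.1 p.2 = i + t + 1 ∧ p.1 < i + t + 1} = ∅ := by
          ext p
          simp only [Set.mem_setOf_eq, Set.mem_empty_iff_false, iff_false, not_and]
          intro hv hlt
          have hmem : p ∈ {q : ℕ × ℕ | T q.1 q.2 = i + t + 1 ∧ q.1 ≤ i + t} :=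
            ⟨hv, by omega⟩
          rw [ih] at hmem
          exact hmem
        have hF := factF hθa hθ.2 hT (i + t) (i + t + 1)
        rw [hRHS, Set.ncard_empty] at hF
        have hfin2 := hfin (fun p : ℕ × ℕ => T p.1 p.2 = i + t + 2 ∧ p.1 ≤ i + t + 1)
          (fun p hp => by rw [hp.1]; omega)
        exact (Set.ncard_eq_zero hfin2).mp (Nat.le_zero.mp hF)
    have hkey := hemp (k - 1 - i)
    have harith : i + (k - 1 - i) = k - 1 := by omega
    rw [harith] at hkey
    have hall : {p : ℕ × ℕ | T p.1 p.2 = k - 1 + 1} =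
        {p : ℕ × ℕ | T p.1 p.2 = k - 1 + 1 ∧ k ≤ p.1} := by
      ext p
      simp only [Set.mem_setOf_eq]
      constructor
      · intro hv
        refine ⟨hv, ?_⟩
        by_contra hc
        have hmem : p ∈ {q : ℕ × ℕ | T q.1 q.2 = k - 1 + 1 ∧ q.1 ≤ k - 1} :=
          ⟨hv, by omega⟩
        rw [hkey] at hmem
        exact hmem
      · exact fun h => h.1
    have hcount := count_rows_ge hθa hT (k - 1) k
    have h6' := h6 (k - 1)
    rw [hall] at h6'
    omega
  obtain ⟨j, hj⟩ := hEx
  have hsh := shape_of_ne h3 (show T i j ≠ 0 by omega)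
  refine ⟨by omega, by omega, ?_⟩
  have hmono := h4 i j (θ i - 1) hsh.1 (by omega) (by omega)
  have hub := hent i (θ i - 1)
  omega

lemma strictF (hμ : IsPartition μ) (hθ : IsPartition θ) (hsub : ∀ i, μ i ≤ θ i)
    (hk : 1 ≤ k) (hfull1 : μ (k - 1) ≤ θ (k - 1)) (hfull2 : θ k < μ (k - 1))
    (ν : ℕ → ℕ) {T : ℕ → ℕ → ℕ} (hT : IsLRFilling θ ν μ T) (m r : ℕ)
    (hm : m + 1 = k) (hr : k ≤ r) :
    {p : ℕ × ℕ | T p.1 p.2 = m + 2 ∧ p.1 ≤ r}.ncard + 1 ≤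
    {p : ℕ × ℕ | T p.1 p.2 = m + 1 ∧ p.1 < r}.ncard := by
  have h3 := hT.2.2.1
  have h5 := hT.2.2.2.2.1
  have h6 := hT.2.2.2.2.2.1
  have hθa := hθ.1
  have hent := entry_le hθa hθ.2 hT
  have hfin := fin_nonzero hθa hθ.2 h3
  set A := {p : ℕ × ℕ | T p.1 p.2 = m + 2 ∧ p.1 ≤ r} with hA
  set B := {p : ℕ × ℕ | T p.1 p.2 = m + 1 ∧ r ≤ p.1} with hB
  set C := {p : ℕ × ℕ | T p.1 p.2 = m + 1 ∧ p.1 < r} with hC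
  have hfinA : A.Finite := hfin _ (fun p hp => by rw [hp.1]; omega)
  have hfinB : B.Finite := hfin _ (fun p hp => by rw [hp.1]; omega)
  have hfinC : C.Finite := hfin _ (fun p hp => by rw [hp.1]; omega)
  have hrowA : ∀ p : ℕ × ℕ, p ∈ A → k ≤ p.1 := by
    intro p hp
    have h1 : T p.1 p.2 = m + 2 := hp.1
    have h2 := hent p.1 p.2
    omega
  have hrowB : ∀ p : ℕ × ℕ, p ∈ B → k ≤ p.1 := by
    intro p hp
    have h1 : r ≤ p.1 := hp.2
    omega
  have hcolAB : Prod.snd '' (A ∪ B) ⊆ Set.Iio (θ k) := by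
    rintro x ⟨p, hp, rfl⟩
    have hrow : k ≤ p.1 := by
      rcases hp with h | h
      · exact hrowA _ h
      · exact hrowB _ h
    have hne : T p.1 p.2 ≠ 0 := by
      rcases hp with h | h
      · have := h.1; omega
      · have := h.1; omega
    have hsh := shape_of_ne h3 hne
    exact lt_of_lt_of_le hsh.2 (hθa hrow)
  have hinjAB : Set.InjOn Prod.snd (A ∪ B) := by
    rintro ⟨a, b⟩ hab ⟨c, d⟩ hcd h
    dsimp only at h
    subst h
    have hva : T a b = m + 2 ∧ a ≤ r ∨ T a b = m + 1 ∧ r ≤ a := by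
      rcases hab with ⟨hv, hr'⟩ | ⟨hv, hr'⟩
      · exact Or.inl ⟨hv, hr'⟩
      · exact Or.inr ⟨hv, hr'⟩
    have hvc : T c b = m + 2 ∧ c ≤ r ∨ T c b = m + 1 ∧ r ≤ c := by
      rcases hcd with ⟨hv, hr'⟩ | ⟨hv, hr'⟩
      · exact Or.inl ⟨hv, hr'⟩
      · exact Or.inr ⟨hv, hr'⟩
    have hsa := shape_of_ne h3 (show T a b ≠ 0 by omega)
    have hsc := shape_of_ne h3 (show T c b ≠ 0 by omega)
    have heq : a = c := by
      rcases lt_trichotomy a c with hlt | heq | hgt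
      · exfalso
        have hmono := h5 a c b hlt hsa.1 hsa.2 hsc.1 hsc.2
        omega
      · exact heq
      · exfalso
        have hmono := h5 c a b hgt hsc.1 hsc.2 hsa.1 hsa.2
        omega
    rw [heq]
  have hABdisj : Disjoint A B := by
    rw [Set.disjoint_left]
    intro p h1 h2
    have hv1 : T p.1 p.2 = m + 2 := h1.1
    have hv2 : T p.1 p.2 = m + 1 := h2.1
    omega
  have hBCdisj : Disjoint B C := by
    rw [Set.disjoint_left]
    intro p h1 h2
    have hv1 : r ≤ p.1 := h1.2
    have hv2 : p.1 < r := h2.2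
    omega
  have key1 : A.ncard + B.ncard ≤ θ k := by
    calc A.ncard + B.ncard = (A ∪ B).ncard := (Set.ncard_union_eq hABdisj hfinA hfinB).symm
      _ = (Prod.snd '' (A ∪ B)).ncard := (Set.ncard_image_of_injOn hinjAB).symm
      _ ≤ (Set.Iio (θ k)).ncard := Set.ncard_le_ncard hcolAB (Set.finite_Iio _)
      _ = θ k := ncard_Iio _
  have key2 : B.ncard + C.ncard = μ m := by
    have hsplit : {p : ℕ × ℕ | T p.1 p.2 = m + 1} = B ∪ C := by
      ext p
      simp only [hB, hC, Set.mem_setOf_eq, Set.mem_union]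
      constructor
      · intro hv
        rcases le_or_gt r p.1 with h | h
        · exact Or.inl ⟨hv, h⟩
        · exact Or.inr ⟨hv, h⟩
      · rintro (⟨hv, _⟩ | ⟨hv, _⟩) <;> exact hv
    have := h6 m
    rw [hsplit, Set.ncard_union_eq hBCdisj hfinB hfinC] at this
    omega
  have hμm : θ k < μ m := by
    have : m = k - 1 := by omega
    rw [this]
    exact hfull2
  omega

end HardDir

/-- Delete the last cell of each of the first `k` rows. -/
def delC (k : ℕ) (θ : ℕ → ℕ) (T : ℕ → ℕ → ℕ) : ℕ → ℕ → ℕ :=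
  fun i j => if i < k ∧ j = θ i - 1 then 0 else T i j

/-- Add back a cell with entry `i+1` at the end of each of the first `k` rows. -/
def addC (k : ℕ) (θ : ℕ → ℕ) (T : ℕ → ℕ → ℕ) : ℕ → ℕ → ℕ :=
  fun i j => if i < k ∧ j = θ i - 1 then i + 1 else T i j

section DelAdd

variable {θ : ℕ → ℕ} {k : ℕ} {T : ℕ → ℕ → ℕ}

lemma delC_set_in (hlast : ∀ i, i < k → T i (θ i - 1) = i + 1)
    {v : ℕ} (hv : v < k) (R : ℕ → Prop) (hR : R v) :
    {p : ℕ × ℕ | delC k θ T p.1 p.2 = v + 1 ∧ R p.1}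
      = {p : ℕ × ℕ | T p.1 p.2 = v + 1 ∧ R p.1} \ {(v, θ v - 1)} := by
  ext p
  simp only [Set.mem_setOf_eq, Set.mem_diff, Set.mem_singleton_iff, delC]
  constructor
  · rintro ⟨hval, hRp⟩
    by_cases hrem : p.1 < k ∧ p.2 = θ p.1 - 1
    · rw [if_pos hrem] at hval; omega
    · rw [if_neg hrem] at hval
      refine ⟨⟨hval, hRp⟩, ?_⟩
      intro hcon
      subst hcon
      exact hrem ⟨hv, rfl⟩
  · rintro ⟨⟨hval, hRp⟩, hne⟩
    have hrem : ¬(p.1 < k ∧ p.2 = θ p.1 - 1) := by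
      intro hcon
      have hl := hlast p.1 hcon.1
      rw [hcon.2] at hval
      have hp1 : p.1 = v := by omega
      exact hne (Prod.ext_iff.mpr ⟨hp1, by rw [hcon.2, hp1]⟩)
    rw [if_neg hrem]
    exact ⟨hval, hRp⟩

lemma delC_set_out (hlast : ∀ i, i < k → T i (θ i - 1) = i + 1)
    {v : ℕ} (R : ℕ → Prop) (h : ¬(v < k ∧ R v)) :
    {p : ℕ × ℕ | delC k θ T p.1 p.2 = v + 1 ∧ R p.1}
      = {p : ℕ × ℕ | T p.1 p.2 = v + 1 ∧ R p.1} := by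
  ext p
  simp only [Set.mem_setOf_eq, delC]
  constructor
  · rintro ⟨hval, hRp⟩
    by_cases hrem : p.1 < k ∧ p.2 = θ p.1 - 1
    · rw [if_pos hrem] at hval; omega
    · rw [if_neg hrem] at hval; exact ⟨hval, hRp⟩
  · rintro ⟨hval, hRp⟩
    have hrem : ¬(p.1 < k ∧ p.2 = θ p.1 - 1) := by
      intro hcon
      have hl := hlast p.1 hcon.1
      rw [hcon.2] at hval
      have hp1 : p.1 = v := by omega
      rw [hp1] at hcon hRp
      exact h ⟨hcon.1, hRp⟩
    rw [if_neg hrem]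
    exact ⟨hval, hRp⟩

lemma addC_set_in (hout : ∀ i, i < k → T i (θ i - 1) = 0)
    {v : ℕ} (hv : v < k) (R : ℕ → Prop) (hR : R v) :
    {p : ℕ × ℕ | addC k θ T p.1 p.2 = v + 1 ∧ R p.1}
      = insert (v, θ v - 1) {p : ℕ × ℕ | T p.1 p.2 = v + 1 ∧ R p.1} := by
  ext p
  simp only [Set.mem_setOf_eq, Set.mem_insert_iff, addC]
  constructor
  · rintro ⟨hval, hRp⟩
    by_cases hrem : p.1 < k ∧ p.2 = θ p.1 - 1
    · rw [if_pos hrem] at hval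
      left
      have hp1 : p.1 = v := by omega
      exact Prod.ext_iff.mpr ⟨hp1, by rw [hrem.2, hp1]⟩
    · rw [if_neg hrem] at hval
      exact Or.inr ⟨hval, hRp⟩
  · rintro (hcon | ⟨hval, hRp⟩)
    · subst hcon
      rw [if_pos ⟨hv, rfl⟩]
      exact ⟨rfl, hR⟩
    · have hrem : ¬(p.1 < k ∧ p.2 = θ p.1 - 1) := by
        intro hcon
        have := hout p.1 hcon.1
        rw [hcon.2] at hval
        omega
      rw [if_neg hrem]
      exact ⟨hval, hRp⟩

lemma addC_set_out (hout : ∀ i, i < k → T i (θ i - 1) = 0)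
    {v : ℕ} (R : ℕ → Prop) (h : ¬(v < k ∧ R v)) :
    {p : ℕ × ℕ | addC k θ T p.1 p.2 = v + 1 ∧ R p.1}
      = {p : ℕ × ℕ | T p.1 p.2 = v + 1 ∧ R p.1} := by
  ext p
  simp only [Set.mem_setOf_eq, addC]
  constructor
  · rintro ⟨hval, hRp⟩
    by_cases hrem : p.1 < k ∧ p.2 = θ p.1 - 1
    · rw [if_pos hrem] at hval
      exfalso
      have hp1 : p.1 = v := by omega
      rw [hp1] at hRp
      exact h ⟨by omega, hRp⟩
    · rw [if_neg hrem] at hval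
      exact ⟨hval, hRp⟩
  · rintro ⟨hval, hRp⟩
    have hrem : ¬(p.1 < k ∧ p.2 = θ p.1 - 1) := by
      intro hcon
      have := hout p.1 hcon.1
      rw [hcon.2] at hval
      omega
    rw [if_neg hrem]
    exact ⟨hval, hRp⟩

end DelAdd

section PresDel

variable {μ θ : ℕ → ℕ} {k : ℕ}

lemma pres_del (hμ : IsPartition μ) (hθ : IsPartition θ) (hsub : ∀ i, μ i ≤ θ i)
    (hk : 1 ≤ k) (hfull1 : μ (k - 1) ≤ θ (k - 1)) (hfull2 : θ k < μ (k - 1))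
    (ν : ℕ → ℕ) {T : ℕ → ℕ → ℕ} (hT : IsLRFilling θ ν μ T) :
    IsLRFilling (removeCol k θ) ν (removeCol k μ) (delC k θ T) := by
  have h1 := hT.1
  have h2 := hT.2.1
  have h3 := hT.2.2.1
  have h4 := hT.2.2.2.1
  have h5 := hT.2.2.2.2.1
  have h6 := hT.2.2.2.2.2.1
  have hμa := hμ.1
  have hθa := hθ.1
  have hμk : ∀ i, i < k → θ k + 1 ≤ μ i := fun i hi =>
    le_trans (by omega) (hμa (by omega : i ≤ k - 1))
  have hθk : ∀ i, i < k → θ k + 1 ≤ θ i := fun i hi =>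
    le_trans (le_trans (by omega) hfull1) (hθa (by omega : i ≤ k - 1))
  have hfin := fin_nonzero hθa hθ.2 h3
  have hlastF := row_last hμ hθ hsub hk hfull1 hfull2 ν hT
  have hlast : ∀ i, i < k → T i (θ i - 1) = i + 1 := fun i hi => (hlastF i hi).2.2
  have hpartθ' := removeCol_theta_part hμ hθ hk hfull1 hfull2
  have hdel_shape : ∀ i j, j < removeCol k θ i → delC k θ T i j = T i j := by
    intro i j hj
    by_cases hi : i < k
    · simp only [removeCol, hi, ite_true] at hj
      simp only [delC]
      rw [if_neg (show ¬(i < k ∧ j = θ i - 1) by intro hcon; omega)]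
    · simp only [removeCol, hi, ite_false] at hj
      simp only [delC]
      rw [if_neg (show ¬(i < k ∧ j = θ i - 1) by intro hcon; exact hi hcon.1)]
  have hrc_le : ∀ i, removeCol k θ i ≤ θ i := by
    intro i
    by_cases hi : i < k <;> simp only [removeCol, hi, ite_true, ite_false] <;> omega
  have hsh' : ∀ i j, j < removeCol k θ i → j < θ i := fun i j hj =>
    lt_of_lt_of_le hj (hrc_le i)
  have c3 : ∀ i j, ¬(ν i ≤ j ∧ j < removeCol k θ i) → delC k θ T i j = 0 := by
    intro i j hn
    by_cases hrem : i < k ∧ j = θ i - 1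
    · simp only [delC]
      rw [if_pos hrem]
    · simp only [delC]
      rw [if_neg hrem]
      apply h3
      intro hcon
      apply hn
      refine ⟨hcon.1, ?_⟩
      by_cases hi : i < k
      · simp only [removeCol, hi, ite_true]
        have hne : j ≠ θ i - 1 := fun h => hrem ⟨hi, h⟩
        omega
      · simp only [removeCol, hi, ite_false]
        exact hcon.2
  refine ⟨?_, ?_, c3, ?_, ?_, ?_, ?_⟩
  · intro i
    by_cases hi : i < k
    · simp only [removeCol, hi, ite_true]
      exact (hlastF i hi).1
    · simp only [removeCol, hi, ite_false]
      exact h1 i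
  · intro i j hj1 hj2
    rw [hdel_shape i j hj2]
    exact h2 i j hj1 (hsh' i j hj2)
  · intro i j j' hj hjj' hj'
    rw [hdel_shape i j (by omega), hdel_shape i j' hj']
    exact h4 i j j' hj hjj' (hsh' i j' hj')
  · intro i i' j hii' hb1 hb2 hb3 hb4
    rw [hdel_shape i j hb2, hdel_shape i' j hb4]
    exact h5 i i' j hii' hb1 (hsh' i j hb2) hb3 (hsh' i' j hb4)
  · intro m
    have e1 : {p : ℕ × ℕ | delC k θ T p.1 p.2 = m + 1} =
        {p : ℕ × ℕ | delC k θ T p.1 p.2 = m + 1 ∧ True} := by ext p; simp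
    have e2 : {p : ℕ × ℕ | T p.1 p.2 = m + 1 ∧ True} =
        {p : ℕ × ℕ | T p.1 p.2 = m + 1} := by ext p; simp
    by_cases hm : m < k
    · have eA : {p : ℕ × ℕ | delC k θ T p.1 p.2 = m + 1 ∧ True} =
          {p : ℕ × ℕ | T p.1 p.2 = m + 1 ∧ True} \ {(m, θ m - 1)} :=
        delC_set_in hlast hm (fun _ => True) trivial
      have hmem : ((m, θ m - 1) : ℕ × ℕ) ∈ {p : ℕ × ℕ | T p.1 p.2 = m + 1 ∧ True} :=
        ⟨hlast m hm, trivial⟩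
      have hfinS : {p : ℕ × ℕ | T p.1 p.2 = m + 1 ∧ True}.Finite :=
        hfin _ (fun p hp => by rw [hp.1]; omega)
      have hdiff := Set.ncard_diff_singleton_add_one hmem hfinS
      have h6m := h6 m
      rw [e2] at hdiff
      rw [e1, eA]
      rw [e2] at eA ⊢
      simp only [removeCol, hm, ite_true]
      have hb := hμk m hm
      omega
    · have eA : {p : ℕ × ℕ | delC k θ T p.1 p.2 = m + 1 ∧ True} =
          {p : ℕ × ℕ | T p.1 p.2 = m + 1 ∧ True} :=
        delC_set_out hlast (fun _ => True) (fun hc => hm hc.1)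
      rw [e1, eA, e2]
      simp only [removeCol, hm, ite_false]
      exact h6 m
  · apply lattice_of_F (fin_nonzero hpartθ'.1 hpartθ'.2 c3)
    intro m r
    by_cases hc1 : m + 1 < k ∧ m + 1 ≤ r
    · have eA : {p : ℕ × ℕ | delC k θ T p.1 p.2 = m + 2 ∧ p.1 ≤ r} =
          {p : ℕ × ℕ | T p.1 p.2 = m + 2 ∧ p.1 ≤ r} \ {(m + 1, θ (m + 1) - 1)} :=
        delC_set_in hlast hc1.1 (fun x => x ≤ r) hc1.2
      have eB : {p : ℕ × ℕ | delC k θ T p.1 p.2 = m + 1 ∧ p.1 < r} =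
          {p : ℕ × ℕ | T p.1 p.2 = m + 1 ∧ p.1 < r} \ {(m, θ m - 1)} :=
        delC_set_in hlast (show m < k by omega) (fun x => x < r) (show m < r by omega)
      have hmemA : ((m + 1, θ (m + 1) - 1) : ℕ × ℕ) ∈
          {p : ℕ × ℕ | T p.1 p.2 = m + 2 ∧ p.1 ≤ r} := ⟨hlast (m + 1) hc1.1, hc1.2⟩
      have hmemB : ((m, θ m - 1) : ℕ × ℕ) ∈
          {p : ℕ × ℕ | T p.1 p.2 = m + 1 ∧ p.1 < r} := ⟨hlast m (by omega), by omega⟩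
      have hfinA : {p : ℕ × ℕ | T p.1 p.2 = m + 2 ∧ p.1 ≤ r}.Finite :=
        hfin _ (fun p hp => by rw [hp.1]; omega)
      have hfinB : {p : ℕ × ℕ | T p.1 p.2 = m + 1 ∧ p.1 < r}.Finite :=
        hfin _ (fun p hp => by rw [hp.1]; omega)
      have ea := Set.ncard_diff_singleton_add_one hmemA hfinA
      have eb := Set.ncard_diff_singleton_add_one hmemB hfinB
      have hF := factF hθa hθ.2 hT m r
      rw [eA, eB]
      omega
    · by_cases hc2 : m < k ∧ m < r
      · have hm1 : m + 1 = k := by omega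
        have hr : k ≤ r := by omega
        have eA : {p : ℕ × ℕ | delC k θ T p.1 p.2 = m + 2 ∧ p.1 ≤ r} =
            {p : ℕ × ℕ | T p.1 p.2 = m + 2 ∧ p.1 ≤ r} :=
          delC_set_out hlast (fun x => x ≤ r) hc1
        have eB : {p : ℕ × ℕ | delC k θ T p.1 p.2 = m + 1 ∧ p.1 < r} =
            {p : ℕ × ℕ | T p.1 p.2 = m + 1 ∧ p.1 < r} \ {(m, θ m - 1)} :=
          delC_set_in hlast hc2.1 (fun x => x < r) hc2.2
        have hmemB : ((m, θ m - 1) : ℕ × ℕ) ∈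
            {p : ℕ × ℕ | T p.1 p.2 = m + 1 ∧ p.1 < r} := ⟨hlast m hc2.1, hc2.2⟩
        have hfinB : {p : ℕ × ℕ | T p.1 p.2 = m + 1 ∧ p.1 < r}.Finite :=
          hfin _ (fun p hp => by rw [hp.1]; omega)
        have eb := Set.ncard_diff_singleton_add_one hmemB hfinB
        have hstrict := strictF hμ hθ hsub hk hfull1 hfull2 ν hT m r hm1 hr
        rw [eA, eB]
        omega
      · have eA : {p : ℕ × ℕ | delC k θ T p.1 p.2 = m + 2 ∧ p.1 ≤ r} =
            {p : ℕ × ℕ | T p.1 p.2 = m + 2 ∧ p.1 ≤ r} :=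
          delC_set_out hlast (fun x => x ≤ r) hc1
        have eB : {p : ℕ × ℕ | delC k θ T p.1 p.2 = m + 1 ∧ p.1 < r} =
            {p : ℕ × ℕ | T p.1 p.2 = m + 1 ∧ p.1 < r} :=
          delC_set_out hlast (fun x => x < r) hc2
        rw [eA, eB]
        exact factF hθa hθ.2 hT m r

end PresDel

section PresAdd

variable {μ θ : ℕ → ℕ} {k : ℕ}

lemma pres_add (hμ : IsPartition μ) (hθ : IsPartition θ) (hsub : ∀ i, μ i ≤ θ i)
    (hk : 1 ≤ k) (hfull1 : μ (k - 1) ≤ θ (k - 1)) (hfull2 : θ k < μ (k - 1))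
    (ν : ℕ → ℕ) {T : ℕ → ℕ → ℕ}
    (hT : IsLRFilling (removeCol k θ) ν (removeCol k μ) T) :
    IsLRFilling θ ν μ (addC k θ T) := by
  have h1 := hT.1
  have h2 := hT.2.1
  have h3 := hT.2.2.1
  have h4 := hT.2.2.2.1
  have h5 := hT.2.2.2.2.1
  have h6 := hT.2.2.2.2.2.1
  have hμa := hμ.1
  have hθa := hθ.1
  have hμk : ∀ i, i < k → θ k + 1 ≤ μ i := fun i hi =>
    le_trans (by omega) (hμa (by omega : i ≤ k - 1))
  have hθk : ∀ i, i < k → θ k + 1 ≤ θ i := fun i hi =>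
    le_trans (le_trans (by omega) hfull1) (hθa (by omega : i ≤ k - 1))
  have hpartθ' := removeCol_theta_part hμ hθ hk hfull1 hfull2
  have hent' := entry_le hpartθ'.1 hpartθ'.2 hT
  have hfin' := fin_nonzero hpartθ'.1 hpartθ'.2 h3
  have hrc : ∀ i, i < k → removeCol k θ i = θ i - 1 := by
    intro i hi; simp only [removeCol, hi, ite_true]
  have hrc_le : ∀ i, removeCol k θ i ≤ θ i := by
    intro i
    by_cases hi : i < k <;> simp only [removeCol, hi, ite_true, ite_false] <;> omega
  have hsh' : ∀ i j, j < removeCol k θ i → j < θ i := fun i j hj =>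
    lt_of_lt_of_le hj (hrc_le i)
  have hout : ∀ i, i < k → T i (θ i - 1) = 0 := by
    intro i hi
    apply h3
    have := hrc i hi
    intro hc
    omega
  have haddc_old : ∀ i j, ¬(i < k ∧ j = θ i - 1) → addC k θ T i j = T i j := by
    intro i j h
    simp only [addC]
    rw [if_neg h]
  have haddc_new : ∀ i j, i < k → j = θ i - 1 → addC k θ T i j = i + 1 := by
    intro i j hi hj
    simp only [addC]
    rw [if_pos ⟨hi, hj⟩]
  have hup_le : ∀ i j, addC k θ T i j ≤ i + 1 := by
    intro i j
    by_cases hrem : i < k ∧ j = θ i - 1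
    · rw [haddc_new i j hrem.1 hrem.2]
    · rw [haddc_old i j hrem]
      exact hent' i j
  have hshape' : ∀ i j, ¬(i < k ∧ j = θ i - 1) → j < θ i → j < removeCol k θ i := by
    intro i j hrem hj
    by_cases hi : i < k
    · rw [hrc i hi]
      have : j ≠ θ i - 1 := fun h => hrem ⟨hi, h⟩
      omega
    · simp only [removeCol, hi, ite_false]
      exact hj
  have c3 : ∀ i j, ¬(ν i ≤ j ∧ j < θ i) → addC k θ T i j = 0 := by
    intro i j hn
    have hrem : ¬(i < k ∧ j = θ i - 1) := by
      intro hc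
      apply hn
      have hb1 := h1 i
      have hb2 := hrc i hc.1
      have hb3 := hθk i hc.1
      omega
    rw [haddc_old i j hrem]
    apply h3
    intro hc
    exact hn ⟨hc.1, hsh' i j hc.2⟩
  refine ⟨?_, ?_, c3, ?_, ?_, ?_, ?_⟩
  · intro i
    exact le_trans (h1 i) (hrc_le i)
  · intro i j hj1 hj2
    by_cases hrem : i < k ∧ j = θ i - 1
    · rw [haddc_new i j hrem.1 hrem.2]
      omega
    · rw [haddc_old i j hrem]
      exact h2 i j hj1 (hshape' i j hrem hj2)
  · intro i j j' hj hjj' hj'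
    by_cases hrem' : i < k ∧ j' = θ i - 1
    · rw [haddc_new i j' hrem'.1 hrem'.2]
      exact hup_le i j
    · rw [haddc_old i j' hrem']
      have hrem : ¬(i < k ∧ j = θ i - 1) := by
        intro hc
        exact hrem' ⟨hc.1, by omega⟩
      rw [haddc_old i j hrem]
      exact h4 i j j' hj hjj' (hshape' i j' hrem' hj')
  · intro i i' j hii' hb1 hb2 hb3 hb4
    by_cases hrem' : i' < k ∧ j = θ i' - 1
    · rw [haddc_new i' j hrem'.1 hrem'.2]
      have := hup_le i j
      omega
    · rw [haddc_old i' j hrem']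
      have hj4' : j < removeCol k θ i' := hshape' i' j hrem' hb4
      by_cases hrem : i < k ∧ j = θ i - 1
      · exfalso
        by_cases hi' : i' < k
        · rw [hrc i' hi'] at hj4'
          have hmono : θ i' ≤ θ i := hθa (le_of_lt hii')
          omega
        · simp only [removeCol, hi', ite_false] at hj4'
          have hmono : θ i' ≤ θ k := hθa (by omega)
          have := hθk i hrem.1
          omega
      · rw [haddc_old i j hrem]
        exact h5 i i' j hii' hb1 (hshape' i j hrem hb2) hb3 hj4'
  · intro m
    have e1 : {p : ℕ × ℕ | addC k θ T p.1 p.2 = m + 1} =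
        {p : ℕ × ℕ | addC k θ T p.1 p.2 = m + 1 ∧ True} := by ext p; simp
    have e2 : {p : ℕ × ℕ | T p.1 p.2 = m + 1 ∧ True} =
        {p : ℕ × ℕ | T p.1 p.2 = m + 1} := by ext p; simp
    by_cases hm : m < k
    · have eA : {p : ℕ × ℕ | addC k θ T p.1 p.2 = m + 1 ∧ True} =
          insert (m, θ m - 1) {p : ℕ × ℕ | T p.1 p.2 = m + 1 ∧ True} :=
        addC_set_in hout hm (fun _ => True) trivial
      have hnmem : ((m, θ m - 1) : ℕ × ℕ) ∉ {p : ℕ × ℕ | T p.1 p.2 = m + 1 ∧ True} := by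
        intro hc
        have hc1 : T m (θ m - 1) = m + 1 := hc.1
        have := hout m hm
        omega
      have hfinS : {p : ℕ × ℕ | T p.1 p.2 = m + 1 ∧ True}.Finite :=
        hfin' _ (fun p hp => by rw [hp.1]; omega)
      have hins := Set.ncard_insert_of_notMem hnmem hfinS
      have h6m := h6 m
      rw [e1, eA, hins, e2]
      simp only [removeCol, hm, ite_true] at h6m
      have hb := hμk m hm
      omega
    · have eA : {p : ℕ × ℕ | addC k θ T p.1 p.2 = m + 1 ∧ True} =
          {p : ℕ × ℕ | T p.1 p.2 = m + 1 ∧ True} :=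
        addC_set_out hout (fun _ => True) (fun hc => hm hc.1)
      rw [e1, eA, e2]
      have h6m := h6 m
      simp only [removeCol, hm, ite_false] at h6m
      exact h6m
  · apply lattice_of_F (fin_nonzero hθa hθ.2 c3)
    intro m r
    have hF := factF hpartθ'.1 hpartθ'.2 hT m r
    have hfinA : {p : ℕ × ℕ | T p.1 p.2 = m + 2 ∧ p.1 ≤ r}.Finite :=
      hfin' _ (fun p hp => by rw [hp.1]; omega)
    have hfinB : {p : ℕ × ℕ | T p.1 p.2 = m + 1 ∧ p.1 < r}.Finite :=
      hfin' _ (fun p hp => by rw [hp.1]; omega)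
    by_cases hc1 : m + 1 < k ∧ m + 1 ≤ r
    · have eA : {p : ℕ × ℕ | addC k θ T p.1 p.2 = m + 2 ∧ p.1 ≤ r} =
          insert (m + 1, θ (m + 1) - 1) {p : ℕ × ℕ | T p.1 p.2 = m + 2 ∧ p.1 ≤ r} :=
        addC_set_in hout hc1.1 (fun x => x ≤ r) hc1.2
      have eB : {p : ℕ × ℕ | addC k θ T p.1 p.2 = m + 1 ∧ p.1 < r} =
          insert (m, θ m - 1) {p : ℕ × ℕ | T p.1 p.2 = m + 1 ∧ p.1 < r} :=
        addC_set_in hout (show m < k by omega) (fun x => x < r) (show m < r by omega)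
      have hnmemA : ((m + 1, θ (m + 1) - 1) : ℕ × ℕ) ∉
          {p : ℕ × ℕ | T p.1 p.2 = m + 2 ∧ p.1 ≤ r} := by
        intro hc
        have hc1' : T (m + 1) (θ (m + 1) - 1) = m + 2 := hc.1
        have := hout (m + 1) hc1.1
        omega
      have hnmemB : ((m, θ m - 1) : ℕ × ℕ) ∉
          {p : ℕ × ℕ | T p.1 p.2 = m + 1 ∧ p.1 < r} := by
        intro hc
        have hc1' : T m (θ m - 1) = m + 1 := hc.1
        have := hout m (by omega)
        omega
      rw [eA, eB, Set.ncard_insert_of_notMem hnmemA hfinA,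
        Set.ncard_insert_of_notMem hnmemB hfinB]
      omega
    · have eA : {p : ℕ × ℕ | addC k θ T p.1 p.2 = m + 2 ∧ p.1 ≤ r} =
          {p : ℕ × ℕ | T p.1 p.2 = m + 2 ∧ p.1 ≤ r} :=
        addC_set_out hout (fun x => x ≤ r) hc1
      by_cases hc2 : m < k ∧ m < r
      · have eB : {p : ℕ × ℕ | addC k θ T p.1 p.2 = m + 1 ∧ p.1 < r} =
            insert (m, θ m - 1) {p : ℕ × ℕ | T p.1 p.2 = m + 1 ∧ p.1 < r} :=
          addC_set_in hout hc2.1 (fun x => x < r) hc2.2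
        have hnmemB : ((m, θ m - 1) : ℕ × ℕ) ∉
            {p : ℕ × ℕ | T p.1 p.2 = m + 1 ∧ p.1 < r} := by
          intro hc
          have hc1' : T m (θ m - 1) = m + 1 := hc.1
          have := hout m hc2.1
          omega
        rw [eA, eB, Set.ncard_insert_of_notMem hnmemB hfinB]
        omega
      · have eB : {p : ℕ × ℕ | addC k θ T p.1 p.2 = m + 1 ∧ p.1 < r} =
            {p : ℕ × ℕ | T p.1 p.2 = m + 1 ∧ p.1 < r} :=
          addC_set_out hout (fun x => x < r) hc2
        rw [eA, eB]
        exact hF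

lemma hard_card (hμ : IsPartition μ) (hθ : IsPartition θ) (hsub : ∀ i, μ i ≤ θ i)
    (hk : 1 ≤ k) (hfull1 : μ (k - 1) ≤ θ (k - 1)) (hfull2 : θ k < μ (k - 1))
    (ν : ℕ → ℕ) :
    Nat.card {T : ℕ → ℕ → ℕ // IsLRFilling θ ν μ T} =
    Nat.card {T : ℕ → ℕ → ℕ // IsLRFilling (removeCol k θ) ν (removeCol k μ) T} := by
  apply Nat.card_congr
  refine ⟨fun T => ⟨delC k θ T.1, pres_del hμ hθ hsub hk hfull1 hfull2 ν T.2⟩,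
          fun T => ⟨addC k θ T.1, pres_add hμ hθ hsub hk hfull1 hfull2 ν T.2⟩, ?_, ?_⟩
  · rintro ⟨T, hT⟩
    apply Subtype.ext
    dsimp only
    funext i j
    by_cases hrem : i < k ∧ j = θ i - 1
    · simp only [addC, delC]
      rw [if_pos hrem]
      have := (row_last hμ hθ hsub hk hfull1 hfull2 ν hT i hrem.1).2.2
      rw [hrem.2]
      omega
    · simp only [addC, delC]
      rw [if_neg hrem, if_neg hrem]
  · rintro ⟨T, hT⟩
    apply Subtype.ext
    dsimp only
    funext i j
    by_cases hrem : i < k ∧ j = θ i - 1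
    · simp only [addC, delC]
      rw [if_pos hrem]
      have hout : T i (θ i - 1) = 0 := by
        apply hT.2.2.1
        have hrc : removeCol k θ i = θ i - 1 := by simp [removeCol, hrem.1]
        intro hc
        omega
      rw [hrem.2, hout]
    · simp only [addC, delC]
      rw [if_neg hrem, if_neg hrem]

end PresAdd

/-- Full-column removal for LR fillings: if `μ` has a `k`-full column in `θ`
(`θ_k ≥ μ_k > θ_{k+1}`, 1-indexed), then for every partition `ν` the number of
LR fillings of `θ/μ` of type `ν` equals the number of LR fillings of
`(θ−1^k)/(μ−1^k)` of type `ν`; consequently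
`c_{μν}^θ = c_{(μ−1^k)ν}^{(θ−1^k)}`. -/
theorem lr_full_column_removal (μ θ : ℕ → ℕ)
    (hμ : IsPartition μ) (hθ : IsPartition θ) (hsub : ∀ i, μ i ≤ θ i)
    (k : ℕ) (hk : 1 ≤ k)
    (hfull1 : μ (k - 1) ≤ θ (k - 1)) (hfull2 : θ k < μ (k - 1)) :
    ∀ ν : ℕ → ℕ, IsPartition ν →
      lrCoeff ν μ θ = lrCoeff ν (removeCol k μ) (removeCol k θ) ∧
      lrCoeff μ ν θ = lrCoeff (removeCol k μ) ν (removeCol k θ) := by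
  intro ν hν
  exact ⟨easy_card hμ hθ hsub hk hfull1 hfull2 ν, hard_card hμ hθ hsub hk hfull1 hfull2 ν⟩
end

section
/- (Stability of the *-operation under full-column removal.) Let p be a positive integer, and let μ, ν be partitions with at most p nonzero parts such that μ_1 > p(ν_1 + p). Then there exists k with 1 ≤ k ≤ p and μ_k > μ_{k+1} + ν_1 + p; let k be the smallest such index. Then μ − 1^k is a partition, λ(μ,ν)_i = μ_i − i for 1 ≤ i ≤ k, and moreover λ(μ − 1^k, ν) = λ(μ,ν) − 1^k and ρ(μ − 1^k, ν) = ρ(μ,ν), where (σ − 1^k)_j = σ_j − 1 for j ≤ k and (σ − 1^k)_j = σ_j for j > k. -/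
/-- Stability of the `*`-operation under full-column removal: if `μ, ν` have
at most `p` nonzero parts and `μ_1 > p(ν_1 + p)`, then some `k` with
`1 ≤ k ≤ p` satisfies `μ_k > μ_{k+1} + ν_1 + p`, and for the smallest such
`k`: `μ − 1^k` is a partition, `λ(μ,ν)_i = μ_i − i` for `1 ≤ i ≤ k`,
`λ(μ − 1^k, ν) = λ(μ,ν) − 1^k`, and `ρ(μ − 1^k, ν) = ρ(μ,ν)`. -/
theorem star_full_column_removal (p : ℕ) (hp : 0 < p) (μ ν : ℕ → ℕ)
    (hμ : IsPartitionN p μ) (hν : IsPartitionN p ν)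
    (h1 : p * (ν 0 + p) < μ 0) :
    (∃ k, 1 ≤ k ∧ k ≤ p ∧ μ k + ν 0 + p < μ (k - 1)) ∧
    (∀ k, 1 ≤ k → k ≤ p → μ k + ν 0 + p < μ (k - 1) →
      (∀ k', 1 ≤ k' → k' < k → ¬(μ k' + ν 0 + p < μ (k' - 1))) →
      IsPartitionN p (removeCol k μ) ∧
      (∀ i, i < k → lamStar p μ ν i = (μ i : ℤ) - (i + 1)) ∧
      (∀ i, i < k → lamStar p (removeCol k μ) ν i = lamStar p μ ν i - 1) ∧
      (∀ i, k ≤ i → i < p → lamStar p (removeCol k μ) ν i = lamStar p μ ν i) ∧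
      (∀ i, i < p → rhoStar p (removeCol k μ) ν i = rhoStar p μ ν i)) := by
  obtain ⟨hmono, hzero⟩ := hμ
  obtain ⟨hνmono, hνzero⟩ := hν
  constructor
  · by_contra h
    push_neg at h
    have key : ∀ m, m ≤ p → μ 0 ≤ μ m + m * (ν 0 + p) := by
      intro m
      induction m with
      | zero => simp
      | succ n ih =>
        intro hnp
        have ha := ih (Nat.le_of_succ_le hnp)
        have hb := h (n + 1) (Nat.succ_le_succ (Nat.zero_le n)) hnp
        simp only [Nat.add_sub_cancel] at hb
        calc μ 0 ≤ μ n + n * (ν 0 + p) := ha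
          _ ≤ (μ (n + 1) + ν 0 + p) + n * (ν 0 + p) := by
              exact Nat.add_le_add_right hb _
          _ = μ (n + 1) + (n + 1) * (ν 0 + p) := by ring
    have := key p le_rfl
    rw [hzero p le_rfl] at this
    omega
  · intro k hk1 hkp hgap _hmin
    have hkey : ∀ i, i < k → ν 0 + p + 1 ≤ μ i := by
      intro i hi
      have h2 : μ (k - 1) ≤ μ i := hmono (by omega)
      omega
    have hfilt : ∀ (a : ℤ), (ν 0 : ℤ) ≤ a →
        (Finset.range p).filter (fun j => a ≤ (ν j : ℤ) - (j + 1)) = ∅ := by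
      intro a ha
      rw [Finset.filter_eq_empty_iff]
      intro j _
      have hνj : ν j ≤ ν 0 := hνmono (Nat.zero_le j)
      have hνj' : (ν j : ℤ) ≤ (ν 0 : ℤ) := by exact_mod_cast hνj
      simp only [not_le]
      omega
    refine ⟨⟨?_, ?_⟩, ?_, ?_, ?_, ?_⟩
    · -- Antitone
      apply antitone_nat_of_succ_le
      intro n
      unfold removeCol
      have hmn : μ (n + 1) ≤ μ n := hmono (Nat.le_succ n)
      rcases lt_trichotomy (n + 1) k with h | h | h
      · rw [if_pos h, if_pos (by omega)]
        omega
      · rw [if_neg (by omega), if_pos (by omega)]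
        subst h
        simp only [Nat.add_sub_cancel] at hgap
        omega
      · rw [if_neg (by omega), if_neg (by omega)]
        exact hmn
    · intro i hi
      have hki : ¬ i < k := by omega
      simp only [removeCol, if_neg hki]
      exact hzero i hi
    · intro i hik
      have hb : (ν 0 : ℤ) ≤ (μ i : ℤ) - (i + 1) := by
        have h2 := hkey i hik
        have h3 : i + 1 ≤ p := by omega
        omega
      unfold lamStar
      rw [hfilt _ hb]
      simp
    · intro i hik
      have h2 := hkey i hik
      have h3 : i + 1 ≤ p := by omega
      have hc : ((μ i - 1 : ℕ) : ℤ) = (μ i : ℤ) - 1 := by omega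
      unfold lamStar removeCol
      rw [if_pos hik, hc]
      have hb1 : (ν 0 : ℤ) ≤ (μ i : ℤ) - 1 - (i + 1) := by omega
      have hb2 : (ν 0 : ℤ) ≤ (μ i : ℤ) - (i + 1) := by omega
      rw [hfilt _ hb1, hfilt _ hb2]
      simp
      ring
    · intro i hki hip
      have hki' : ¬ i < k := by omega
      unfold lamStar removeCol
      rw [if_neg hki']
    · intro i hip
      have hνi : ν i ≤ ν 0 := hνmono (Nat.zero_le i)
      unfold rhoStar
      congr 2
      congr 1
      apply Finset.filter_congr
      intro k' hk'mem
      rw [Finset.mem_range] at hk'mem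
      by_cases hk' : k' < k
      · have h2 := hkey k' hk'
        have h3 : k' + 1 ≤ p := by omega
        simp only [removeCol, if_pos hk']
        have hc : ((μ k' - 1 : ℕ) : ℤ) = (μ k' : ℤ) - 1 := by omega
        rw [hc]
        constructor <;> intro <;> omega
      · simp only [removeCol, if_neg hk']
end
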